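/- For every integer ℓ ≥ 3, the least k such that the length-km prefix of the Thue-Morse word is not a k-anti-power, with m = 3·2^{ℓ-2} + 1, satisfies K(m) > 5·2^{2ℓ-3}/(3·2^{ℓ-2} + 1). -/

import Mathlib

open Filter

/-- The Thue-Morse word, indexed from 1: `tm i` is the parity of the number of
1's in the binary expansion of `i - 1`. -/
def tm (i : ℕ) : ℕ := (Nat.digits 2 (i - 1)).sum % 2

/-- The factor `t_a t_{a+1} ⋯ t_b` of the Thue-Morse word. -/
def seg (a b : ℕ) : List ℕ := (List.range (b + 1 - a)).map (fun j => tm (a + j))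

/-- The `i`-th block of length `m` of the Thue-Morse word (blocks indexed from 0):
`t_{im+1} ⋯ t_{(i+1)m}`. -/
def block (m i : ℕ) : List ℕ := seg (i * m + 1) ((i + 1) * m)

/-- The prefix of the Thue-Morse word of length `k * m` is a `k`-anti-power:
its `k` consecutive blocks of length `m` are pairwise distinct. -/
def IsAntiPowerPrefix (m k : ℕ) : Prop :=
  ∀ i j, i < k → j < k → i ≠ j → block m i ≠ block m j

/-- `w` is a factor (contiguous substring) of the Thue-Morse word. -/
def IsFactor (w : List ℕ) : Prop :=
  ∃ a : ℕ, w = (List.range w.length).map (fun j => tm (a + 1 + j))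

/-- `δ(m) = ⌈log₂ (m/3)⌉` (a nonnegative integer for `m ≥ 2`). -/
noncomputable def delta (m : ℕ) : ℕ := (⌈Real.logb 2 ((m : ℝ) / 3)⌉).toNat

/-- `⌈log₂ m⌉`. -/
noncomputable def ell (m : ℕ) : ℕ := (⌈Real.logb 2 (m : ℝ)⌉).toNat

/-- `K(m)`: the smallest `k` such that the prefix of the Thue-Morse word of
length `k * m` is not a `k`-anti-power. -/
noncomputable def Kap (m : ℕ) : ℕ := sInf {k | ¬ IsAntiPowerPrefix m k}

/-- `γ(k)`: the smallest odd positive integer `m` such that the prefix of the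
Thue-Morse word of length `k * m` is a `k`-anti-power. -/
noncomputable def gam (k : ℕ) : ℕ := sInf {m | Odd m ∧ IsAntiPowerPrefix m k}

/-- `Γ(k)`: the largest odd positive integer `m` such that the prefix of the
Thue-Morse word of length `k * m` is not a `k`-anti-power. -/
noncomputable def Gam (k : ℕ) : ℕ := sSup {m | Odd m ∧ ¬ IsAntiPowerPrefix m k}

/-- The Thue-Morse morphism `μ` (0 ↦ 01, 1 ↦ 10) on words. -/
def mu (w : List ℕ) : List ℕ := w.flatMap (fun a => if a = 0 then [0, 1] else [1, 0])

/-!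
A window of length `3·2^D + 1` of the Thue–Morse word determines its starting position modulo
`2^(D+1)`. So if two blocks of length `m = 3·2^D + 1` coincide, their indices differ by a multiple
of `2^(D+1)` (`m` is odd), and in the range `k m ≤ 5·2^(2D+1)` the only possible difference is
`2^(D+1)` itself. Desubstituting `D+1` times, equality of two such blocks forces
`t q = t (q + m)` and `t (q+1) = t (q+1+m)` for some `q < 2^(D+1) - 2`, which a case analysis on
the binary expansion of `q` refutes using that `t` has no run of three equal letters.
-/

def thueMorse (n : ℕ) : ℕ := (Nat.digits 2 n).sum % 2

lemma tm_succ (n : ℕ) : tm (n + 1) = thueMorse n := rfl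

@[simp] lemma thueMorse_zero : thueMorse 0 = 0 := rfl

@[simp] lemma thueMorse_one : thueMorse 1 = 1 := rfl

lemma thueMorse_lt_two (n : ℕ) : thueMorse n < 2 := Nat.mod_lt _ two_pos

lemma thueMorse_two_mul_add (n : ℕ) {e : ℕ} (he : e < 2) :
    thueMorse (2 * n + e) = (thueMorse n + e) % 2 := by
  rcases Nat.eq_zero_or_pos (2 * n + e) with h | h
  · obtain ⟨rfl, rfl⟩ : n = 0 ∧ e = 0 := by omega
    rfl
  · rw [thueMorse, Nat.digits_def' one_lt_two h, List.sum_cons, thueMorse,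
      show (2 * n + e) % 2 = e by omega, show (2 * n + e) / 2 = n by omega]
    omega

lemma thueMorse_two_mul (n : ℕ) : thueMorse (2 * n) = thueMorse n := by
  simpa [Nat.mod_eq_of_lt (thueMorse_lt_two n)] using thueMorse_two_mul_add n two_pos

lemma thueMorse_two_mul_add_one (n : ℕ) : thueMorse (2 * n + 1) = (thueMorse n + 1) % 2 :=
  thueMorse_two_mul_add n one_lt_two

lemma thueMorse_two_pow_mul_add (k a : ℕ) {r : ℕ} (hr : r < 2 ^ k) :
    thueMorse (2 ^ k * a + r) = (thueMorse a + thueMorse r) % 2 := by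
  induction k generalizing r with
  | zero =>
    obtain rfl : r = 0 := by omega
    simp [Nat.mod_eq_of_lt (thueMorse_lt_two a)]
  | succ k ih =>
    have hr2 : r % 2 < 2 := Nat.mod_lt _ two_pos
    rw [show 2 ^ (k + 1) * a + r = 2 * (2 ^ k * a + r / 2) + r % 2 by
        rw [pow_succ, mul_comm _ 2, mul_assoc]; omega,
      thueMorse_two_mul_add _ hr2, ih (by rw [pow_succ] at hr; omega),
      ← Nat.div_add_mod r 2, thueMorse_two_mul_add _ hr2, Nat.div_add_mod r 2]
    omega

lemma thueMorse_two_pow_add (k : ℕ) {r : ℕ} (hr : r < 2 ^ k) :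
    thueMorse (2 ^ k + r) = (thueMorse r + 1) % 2 := by
  have := thueMorse_two_pow_mul_add k 1 hr
  rw [mul_one, thueMorse_one] at this
  omega

lemma thueMorse_two_pow (k : ℕ) : thueMorse (2 ^ k) = 1 := by
  simpa using thueMorse_two_pow_add k (Nat.two_pow_pos k)

lemma thueMorse_two_pow_sub_one (k : ℕ) : thueMorse (2 ^ k - 1) = k % 2 := by
  induction k with
  | zero => rfl
  | succ k ih =>
    have := Nat.two_pow_pos k
    rw [show 2 ^ (k + 1) - 1 = 2 * (2 ^ k - 1) + 1 by rw [pow_succ]; omega,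
      thueMorse_two_mul_add_one, ih]
    omega

lemma thueMorse_not_three_eq (n : ℕ) :
    ¬ (thueMorse n = thueMorse (n + 1) ∧ thueMorse (n + 1) = thueMorse (n + 2)) := by
  rintro ⟨h₁, h₂⟩
  rcases Nat.even_or_odd' n with ⟨c, rfl | rfl⟩
  · rw [thueMorse_two_mul_add_one, thueMorse_two_mul] at h₁
    have := thueMorse_lt_two c
    omega
  · rw [show 2 * c + 1 + 1 = 2 * (c + 1) by ring, show 2 * c + 1 + 2 = 2 * (c + 1) + 1 by ring,
      thueMorse_two_mul_add_one, thueMorse_two_mul] at h₂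
    have := thueMorse_lt_two (c + 1)
    omega

lemma thueMorse_mod_two_eq_of_agree {p q : ℕ}
    (h : ∀ s < 4, thueMorse (p + s) = thueMorse (q + s)) : p % 2 = q % 2 := by
  have not_even_odd :
      ∀ a b : ℕ, ¬ ∀ s < 4, thueMorse (2 * a + s) = thueMorse (2 * b + 1 + s) := by
    intro a b h
    have h₀ := h 0 (by norm_num)
    have h₁ := h 1 (by norm_num)
    have h₂ := h 2 (by norm_num)
    have h₃ := h 3 (by norm_num)
    rw [add_zero, add_zero, thueMorse_two_mul, thueMorse_two_mul_add_one] at h₀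
    rw [show 2 * b + 1 + 1 = 2 * (b + 1) by ring, thueMorse_two_mul_add_one,
      thueMorse_two_mul] at h₁
    rw [show 2 * a + 2 = 2 * (a + 1) by ring, show 2 * b + 1 + 2 = 2 * (b + 1) + 1 by ring,
      thueMorse_two_mul, thueMorse_two_mul_add_one] at h₂
    rw [show 2 * a + 3 = 2 * (a + 1) + 1 by ring, show 2 * b + 1 + 3 = 2 * (b + 2) by ring,
      thueMorse_two_mul_add_one, thueMorse_two_mul] at h₃
    have := thueMorse_lt_two a
    have := thueMorse_lt_two (a + 1)
    have := thueMorse_lt_two b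
    have := thueMorse_lt_two (b + 1)
    exact thueMorse_not_three_eq b ⟨by omega, by omega⟩
  by_contra hne
  rcases Nat.mod_two_eq_zero_or_one p with hp | hp
  · exact not_even_odd (p / 2) (q / 2) fun s hs => by
      rw [show 2 * (p / 2) + s = p + s by omega, show 2 * (q / 2) + 1 + s = q + s by omega]
      exact h s hs
  · exact not_even_odd (q / 2) (p / 2) fun s hs => by
      rw [show 2 * (q / 2) + s = q + s by omega, show 2 * (p / 2) + 1 + s = p + s by omega]
      exact (h s hs).symm

lemma thueMorse_modEq_of_agree (D : ℕ) {p q : ℕ}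
    (h : ∀ s < 3 * 2 ^ D + 1, thueMorse (p + s) = thueMorse (q + s)) :
    p ≡ q [MOD 2 ^ (D + 1)] := by
  induction D generalizing p q with
  | zero => exact thueMorse_mod_two_eq_of_agree fun s hs => h s (by simpa using hs)
  | succ D ih =>
    have hpar : p % 2 = q % 2 := thueMorse_mod_two_eq_of_agree fun s hs =>
      h s (by have := Nat.two_pow_pos (D + 1); omega)
    have hlt : p % 2 < 2 := Nat.mod_lt _ two_pos
    have hhalf : p / 2 ≡ q / 2 [MOD 2 ^ (D + 1)] := ih fun s hs => by
      have := h (2 * s) (by rw [pow_succ]; omega)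
      rw [show p + 2 * s = 2 * (p / 2 + s) + p % 2 by omega,
        show q + 2 * s = 2 * (q / 2 + s) + p % 2 by omega,
        thueMorse_two_mul_add _ hlt, thueMorse_two_mul_add _ hlt] at this
      have := thueMorse_lt_two (p / 2 + s)
      have := thueMorse_lt_two (q / 2 + s)
      omega
    rw [← Nat.div_add_mod p 2, ← Nat.div_add_mod q 2, hpar, pow_succ']
    exact (hhalf.mul_left' 2).add_right _

lemma thueMorse_three_mul_two_pow_add (e : ℕ) {r : ℕ} (hr : r < 2 ^ e) :
    thueMorse (3 * 2 ^ e + r) = thueMorse r := by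
  rw [show 3 * 2 ^ e + r = 2 ^ (e + 1) + (2 ^ e + r) by ring,
    thueMorse_two_pow_add (e + 1) (by rw [pow_succ]; omega), thueMorse_two_pow_add e hr]
  have := thueMorse_lt_two r
  omega

lemma not_thueMorse_eq_shift_pair {e q : ℕ} (he : 1 ≤ e) (hq : q + 3 ≤ 2 ^ (e + 1)) :
    ¬ (thueMorse q = thueMorse (q + (3 * 2 ^ e + 1)) ∧
      thueMorse (q + 1) = thueMorse (q + 1 + (3 * 2 ^ e + 1))) := by
  rintro ⟨h₀, h₁⟩
  have h2 : 2 ^ (e + 1) = 2 * 2 ^ e := pow_succ' 2 e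
  have h4 : 2 ^ (e + 2) = 4 * 2 ^ e := by rw [pow_add]; ring
  rcases lt_trichotomy (q + 2) (2 ^ e) with hlt | heq | hgt
  · rw [show q + (3 * 2 ^ e + 1) = 3 * 2 ^ e + (q + 1) by ring,
      thueMorse_three_mul_two_pow_add e (by omega)] at h₀
    rw [show q + 1 + (3 * 2 ^ e + 1) = 3 * 2 ^ e + (q + 2) by ring,
      thueMorse_three_mul_two_pow_add e (by omega)] at h₁
    exact thueMorse_not_three_eq q ⟨h₀, h₁⟩
  · obtain ⟨c, rfl⟩ : ∃ c, q = 2 * c :=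
      ⟨q / 2, by have := dvd_pow_self 2 (by omega : e ≠ 0); omega⟩
    have hodd := thueMorse_two_pow_sub_one e
    rw [show 2 ^ e - 1 = 2 * c + 1 by omega, thueMorse_two_mul_add_one] at hodd
    rw [show 2 * c + (3 * 2 ^ e + 1) = 2 ^ (e + 2) - 1 by omega, thueMorse_two_pow_sub_one,
      thueMorse_two_mul] at h₀
    omega
  · rcases eq_or_lt_of_le (show 2 ^ e ≤ q + 1 by omega) with hq1 | hq1
    · rw [← hq1, thueMorse_two_pow, show 2 ^ e + (3 * 2 ^ e + 1) = 2 ^ (e + 2) + 1 by omega,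
        thueMorse_two_pow_add _ (by omega), thueMorse_one] at h₁
      omega
    · obtain ⟨r, rfl⟩ : ∃ r, q = 2 ^ e + r := ⟨q - 2 ^ e, by omega⟩
      rw [thueMorse_two_pow_add e (by omega),
        show 2 ^ e + r + (3 * 2 ^ e + 1) = 2 ^ (e + 2) + (r + 1) by omega,
        thueMorse_two_pow_add _ (by omega)] at h₀
      rw [show 2 ^ e + r + 1 = 2 ^ e + (r + 1) by ring, thueMorse_two_pow_add e (by omega),
        show 2 ^ e + (r + 1) + (3 * 2 ^ e + 1) = 2 ^ (e + 2) + (r + 2) by omega,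
        thueMorse_two_pow_add _ (by omega)] at h₁
      have := thueMorse_lt_two r
      have := thueMorse_lt_two (r + 1)
      have := thueMorse_lt_two (r + 2)
      exact thueMorse_not_three_eq r ⟨by omega, by omega⟩

lemma thueMorse_agree_div {j m d x : ℕ} (hm : 2 ^ j < m)
    (h : ∀ s < m, thueMorse (x + s) = thueMorse (x + 2 ^ j * d + s)) :
    thueMorse (x / 2 ^ j) = thueMorse (x / 2 ^ j + d) ∧
      thueMorse (x / 2 ^ j + 1) = thueMorse (x / 2 ^ j + 1 + d) := by
  have hr : x % 2 ^ j < 2 ^ j := Nat.mod_lt _ (Nat.two_pow_pos j)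
  have hx := Nat.div_add_mod x (2 ^ j)
  set q := x / 2 ^ j
  set r := x % 2 ^ j
  have := thueMorse_lt_two q
  have := thueMorse_lt_two (q + 1)
  have := thueMorse_lt_two (q + d)
  have := thueMorse_lt_two (q + 1 + d)
  constructor
  · have h₀ := h 0 (by omega)
    rw [add_zero, add_zero, ← hx, add_right_comm, ← mul_add,
      thueMorse_two_pow_mul_add _ _ hr, thueMorse_two_pow_mul_add _ _ hr] at h₀
    omega
  · have h₀ := h (2 ^ j - r) (by omega)
    rw [show x + (2 ^ j - r) = 2 ^ j * (q + 1) + 0 by rw [← hx, mul_add]; omega,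
      show x + 2 ^ j * d + (2 ^ j - r) = 2 ^ j * (q + 1 + d) + 0 by
        rw [← hx, mul_add, mul_add]; omega,
      thueMorse_two_pow_mul_add _ _ (Nat.two_pow_pos j),
      thueMorse_two_pow_mul_add _ _ (Nat.two_pow_pos j)] at h₀
    simp only [thueMorse_zero, add_zero] at h₀
    omega

lemma block_eq_map (m i : ℕ) :
    block m i = (List.range m).map fun s => thueMorse (i * m + s) := by
  rw [block, seg, show (i + 1) * m + 1 - (i * m + 1) = m by rw [add_mul, one_mul]; omega]
  exact List.map_congr_left fun s _ => by rw [add_right_comm, tm_succ]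

lemma block_eq_block_iff {m i j : ℕ} :
    block m i = block m j ↔ ∀ s < m, thueMorse (i * m + s) = thueMorse (j * m + s) := by
  simp only [block_eq_map, List.map_inj_left, List.mem_range]

lemma exists_not_isAntiPowerPrefix (m : ℕ) : ∃ k, ¬ IsAntiPowerPrefix m k := by
  obtain ⟨i, j, hij, hf⟩ := Finite.exists_ne_map_eq_of_infinite
    fun i (s : Fin m) => (⟨thueMorse (i * m + s), thueMorse_lt_two _⟩ : Fin 2)
  refine ⟨max i j + 1, fun hanti => hanti i j (by omega) (by omega) hij ?_⟩
  exact block_eq_block_iff.mpr fun s hs => congrArg Fin.val (congrFun hf ⟨s, hs⟩)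

lemma two_pow_dvd_sub_of_block_eq {D a b : ℕ} (hD : 1 ≤ D) (hab : a ≤ b)
    (h : block (3 * 2 ^ D + 1) a = block (3 * 2 ^ D + 1) b) : 2 ^ (D + 1) ∣ b - a := by
  have hodd : Odd (3 * 2 ^ D + 1) :=
    ((Nat.even_pow.mpr ⟨even_two, by omega⟩).mul_left 3).add_one
  have hcop : Nat.gcd (2 ^ (D + 1)) (3 * 2 ^ D + 1) = 1 :=
    (Nat.coprime_two_left.mpr hodd).pow_left _
  exact (Nat.modEq_iff_dvd' hab).mp <| Nat.ModEq.cancel_right_of_coprime hcop <|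
    thueMorse_modEq_of_agree D (block_eq_block_iff.mp h)

lemma block_ne_block_add_two_pow {D a : ℕ} (hD : 1 ≤ D)
    (ha : (a + 2 ^ (D + 1) + 1) * (3 * 2 ^ D + 1) ≤ 5 * 2 ^ (2 * D + 1)) :
    block (3 * 2 ^ D + 1) a ≠ block (3 * 2 ^ D + 1) (a + 2 ^ (D + 1)) := by
  intro h
  have hq : a * (3 * 2 ^ D + 1) / 2 ^ (D + 1) + 3 ≤ 2 ^ (D + 1) := by
    have hdiv := Nat.div_mul_le_self (a * (3 * 2 ^ D + 1)) (2 ^ (D + 1))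
    rw [pow_succ] at hdiv ⊢
    rw [pow_succ, pow_succ, pow_mul'] at ha
    generalize 2 ^ D = X at ha hdiv ⊢
    generalize a * (3 * X + 1) / (X * 2) = Q at hdiv ⊢
    nlinarith
  refine not_thueMorse_eq_shift_pair hD hq
    (thueMorse_agree_div (m := 3 * 2 ^ D + 1) ?_ fun s hs => ?_)
  · rw [pow_succ]; omega
  · rw [block_eq_block_iff.mp h s hs, add_mul, mul_comm (2 ^ (D + 1))]

lemma isAntiPowerPrefix_of_mul_le {D k : ℕ} (hD : 1 ≤ D)
    (hk : k * (3 * 2 ^ D + 1) ≤ 5 * 2 ^ (2 * D + 1)) :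
    IsAntiPowerPrefix (3 * 2 ^ D + 1) k := by
  suffices H : ∀ a b, a < b → b < k → block (3 * 2 ^ D + 1) a ≠ block (3 * 2 ^ D + 1) b by
    intro i j hi hj hij
    rcases hij.lt_or_gt with h | h
    · exact H i j h hj
    · exact (H j i h hi).symm
  intro a b hab hbk h
  have hbk' : (b + 1) * (3 * 2 ^ D + 1) ≤ 5 * 2 ^ (2 * D + 1) :=
    (Nat.mul_le_mul_right _ hbk).trans hk
  obtain ⟨c, hc⟩ := two_pow_dvd_sub_of_block_eq hD hab.le h
  rcases c with _ | _ | c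
  · omega
  · obtain rfl : b = a + 2 ^ (D + 1) := by omega
    exact block_ne_block_add_two_pow hD hbk' h
  · have hb : 2 ^ (D + 1) * 2 ≤ b := by
      have := Nat.mul_le_mul_left (2 ^ (D + 1)) (show 2 ≤ c + 1 + 1 by omega)
      omega
    rw [pow_succ, pow_mul'] at hbk'
    rw [pow_succ] at hb
    generalize 2 ^ D = X at hbk' hb
    nlinarith

theorem stmt18 (ℓ : ℕ) (hℓ : 3 ≤ ℓ) :
    (5 * 2 ^ (2 * ℓ - 3) : ℝ) / (3 * 2 ^ (ℓ - 2) + 1) <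
      (Kap (3 * 2 ^ (ℓ - 2) + 1) : ℝ) := by
  obtain ⟨D, rfl⟩ : ∃ D, ℓ = D + 2 := ⟨ℓ - 2, by omega⟩
  have hK : 5 * 2 ^ (2 * D + 1) < Kap (3 * 2 ^ D + 1) * (3 * 2 ^ D + 1) := by
    by_contra! h
    exact Nat.sInf_mem (exists_not_isAntiPowerPrefix _) (isAntiPowerPrefix_of_mul_le (by omega) h)
  rw [show 2 * (D + 2) - 3 = 2 * D + 1 by omega, Nat.add_sub_cancel, div_lt_iff₀ (by positivity)]
  exact_mod_cast hK
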